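/- arXiv:1804.02550 — 3 statements merged into one kernel-verified Lean document; each statement's English description precedes it below -/
import Mathlib

section
/- The domination number of the Knödel graph W_{4,16} is 4. -/
/-- The Knödel graph `W_{Δ,n}` with `m = n/2`: bipartite graph on `U ⊕ V`,
where `u_i` (as `Sum.inl i`, indices mod `m`) is adjacent to `v_j` (`Sum.inr j`)
iff `j ≡ i + 2^k - 1 (mod m)` for some `k < Δ`. -/
def knodel (Δ m : ℕ) : SimpleGraph (ZMod m ⊕ ZMod m) where
  Adj x y := match x, y with
    | Sum.inl i, Sum.inr j => ∃ k, k < Δ ∧ j = i + 2 ^ k - 1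
    | Sum.inr j, Sum.inl i => ∃ k, k < Δ ∧ j = i + 2 ^ k - 1
    | _, _ => False
  symm := ⟨by rintro (i | i) (j | j) h <;> exact h⟩
  loopless := ⟨by rintro (i | i) h <;> exact h⟩

/-- `D` is a dominating set of `G`: every vertex not in `D` has a neighbor in `D`. -/
def IsDominatingSet {V : Type*} (G : SimpleGraph V) (D : Set V) : Prop :=
  ∀ v ∉ D, ∃ u ∈ D, G.Adj u v

/-- The domination number: minimum cardinality of a (finite) dominating set. -/
noncomputable def dominationNumber {V : Type*} (G : SimpleGraph V) : ℕ :=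
  sInf {k | ∃ D : Set V, D.Finite ∧ D.ncard = k ∧ IsDominatingSet G D}

/-- Index-distance of `u_i` and `u_j`: `min(|i-j|, m - |i-j|)`. -/
def idDist (m i j : ℕ) : ℕ :=
  min ((i : ℤ) - (j : ℤ)).natAbs (m - ((i : ℤ) - (j : ℤ)).natAbs)

/-- `M_Δ = {2^a - 2^b : 0 ≤ b < a < Δ}`. -/
def Mset (Δ : ℕ) : Set ℕ := {d | ∃ a b : ℕ, b < a ∧ a < Δ ∧ d = 2 ^ a - 2 ^ b}


/-!
Every vertex of `W_{4,16}` has degree at most `4`, so it dominates at most `5` of the `16`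
vertices and at least `⌈16 / 5⌉ = 4` vertices are needed. The set `{u_0, u_4, v_2, v_6}`
dominates.
-/

open Finset

section

variable {V : Type*} {G : SimpleGraph V}

theorem dominationNumber_eq_of_le {k : ℕ} {D₀ : Set V} (hD₀ : D₀.Finite)
    (hcard : D₀.ncard = k) (hdom : IsDominatingSet G D₀)
    (hmin : ∀ D : Set V, D.Finite → IsDominatingSet G D → k ≤ D.ncard) :
    dominationNumber G = k :=
  le_antisymm (Nat.sInf_le ⟨D₀, hD₀, hcard, hdom⟩)
    (le_csInf ⟨k, D₀, hD₀, hcard, hdom⟩ fun _ ⟨D, hD, hDk, hDdom⟩ => hDk ▸ hmin D hD hDdom)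

theorem IsDominatingSet.card_le_mul_ncard [Fintype V] [DecidableRel G.Adj]
    {D : Set V} (hD : IsDominatingSet G D) :
    Fintype.card V ≤ D.ncard * (G.maxDegree + 1) := by
  classical
  have hcover : (univ : Finset V) ⊆ D.toFinset.biUnion fun u => insert u (G.neighborFinset u) := by
    intro v _
    by_cases hv : v ∈ D
    · exact mem_biUnion.2 ⟨v, Set.mem_toFinset.2 hv, mem_insert_self v _⟩
    · obtain ⟨u, hu, huv⟩ := hD v hv
      exact mem_biUnion.2 ⟨u, Set.mem_toFinset.2 hu,
        mem_insert_of_mem ((G.mem_neighborFinset u v).2 huv)⟩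
  calc Fintype.card V = (univ : Finset V).card := card_univ.symm
    _ ≤ _ := card_le_card hcover
    _ ≤ D.toFinset.card * (G.maxDegree + 1) :=
      card_biUnion_le_card_mul _ _ _ fun u _ =>
        (card_insert_le u _).trans (by simpa using G.degree_le_maxDegree u)
    _ = D.ncard * (G.maxDegree + 1) := by rw [Set.ncard_eq_toFinset_card']

end

instance knodel.decidableAdj (Δ m : ℕ) : DecidableRel (knodel Δ m).Adj
  | Sum.inl i, Sum.inr j => inferInstanceAs (Decidable (∃ k, k < Δ ∧ j = i + 2 ^ k - 1))
  | Sum.inr j, Sum.inl i => inferInstanceAs (Decidable (∃ k, k < Δ ∧ j = i + 2 ^ k - 1))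
  | Sum.inl _, Sum.inl _ => isFalse id
  | Sum.inr _, Sum.inr _ => isFalse id

theorem knodel_degree_le (Δ m : ℕ) [NeZero m] (x : ZMod m ⊕ ZMod m) :
    (knodel Δ m).degree x ≤ Δ := by
  suffices ∃ f : ℕ → ZMod m ⊕ ZMod m, (knodel Δ m).neighborFinset x ⊆ (range Δ).image f by
    obtain ⟨f, hf⟩ := this
    calc (knodel Δ m).degree x = ((knodel Δ m).neighborFinset x).card :=
        ((knodel Δ m).card_neighborFinset_eq_degree x).symm
      _ ≤ ((range Δ).image f).card := card_le_card hf
      _ ≤ Δ := card_image_le.trans (card_range Δ).le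
  rcases x with i | j
  · refine ⟨fun k => Sum.inr (i + 2 ^ k - 1), fun y hy => ?_⟩
    rcases y with _ | j
    · exact ((knodel Δ m).mem_neighborFinset _ _ |>.1 hy).elim
    · obtain ⟨k, hk, rfl⟩ := (knodel Δ m).mem_neighborFinset _ _ |>.1 hy
      exact mem_image_of_mem _ (mem_range.2 hk)
  · refine ⟨fun k => Sum.inl (j + 1 - 2 ^ k), fun y hy => ?_⟩
    rcases y with i | _
    · obtain ⟨k, hk, rfl⟩ := (knodel Δ m).mem_neighborFinset _ _ |>.1 hy
      exact mem_image.2 ⟨k, mem_range.2 hk, by rw [sub_add_cancel, add_sub_cancel_right]⟩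
    · exact ((knodel Δ m).mem_neighborFinset _ _ |>.1 hy).elim

theorem domination_knodel_16 : dominationNumber (knodel 4 8) = 4 := by
  have hdom : IsDominatingSet (knodel 4 8)
      ↑({Sum.inl 0, Sum.inl 4, Sum.inr 2, Sum.inr 6} : Finset (ZMod 8 ⊕ ZMod 8)) := by
    simp only [IsDominatingSet, mem_coe]
    decide
  refine dominationNumber_eq_of_le (Set.toFinite _) (by rw [Set.ncard_coe_finset]; rfl) hdom ?_
  intro D _ hD
  have hΔ : (knodel 4 8).maxDegree ≤ 4 :=
    (knodel 4 8).maxDegree_le_of_forall_degree_le 4 (knodel_degree_le 4 8)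
  have h16 : 16 ≤ D.ncard * 5 :=
    calc 16 = Fintype.card (ZMod 8 ⊕ ZMod 8) := rfl
      _ ≤ D.ncard * ((knodel 4 8).maxDegree + 1) := hD.card_le_mul_ncard
      _ ≤ D.ncard * 5 := Nat.mul_le_mul_left _ (by omega)
  omega
end

section
/- The domination number of the Knödel graph W_{4,18} is 4. -/
/-!
Every closed neighbourhood in `W_{4,18}` has at most `4 + 1` vertices, so a dominating set `D`
satisfies `18 ≤ 5 |D|`, i.e. `|D| ≥ 4`; and `{u_0, u_1, v_5, v_6}` dominates.
-/

open Finset in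
theorem nat_card_le_ncard_mul_of_isDominatingSet {V : Type*} [Finite V] (G : SimpleGraph V)
    {Δ : ℕ} (hdeg : ∀ v, (G.neighborSet v).ncard ≤ Δ) {D : Set V} (hD : IsDominatingSet G D) :
    Nat.card V ≤ D.ncard * (Δ + 1) := by
  set t := D.toFinite.toFinset
  have hcover : Set.univ ⊆ ⋃ u ∈ t, insert u (G.neighborSet u) := by
    intro v _
    simp only [Set.mem_iUnion, Set.mem_insert_iff, SimpleGraph.mem_neighborSet, exists_prop, t,
      Set.Finite.mem_toFinset]
    by_cases hv : v ∈ D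
    · exact ⟨v, hv, .inl rfl⟩
    · obtain ⟨u, hu, hadj⟩ := hD v hv
      exact ⟨u, hu, .inr hadj⟩
  calc Nat.card V = (Set.univ : Set V).ncard := (Set.ncard_univ V).symm
    _ ≤ (⋃ u ∈ t, insert u (G.neighborSet u)).ncard := Set.ncard_le_ncard hcover
    _ ≤ ∑ u ∈ t, (insert u (G.neighborSet u)).ncard := set_ncard_biUnion_le t _
    _ ≤ ∑ _u ∈ t, (Δ + 1) :=
      sum_le_sum fun u _ ↦ (Set.ncard_insert_le u _).trans (Nat.add_le_add_right (hdeg u) 1)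
    _ = D.ncard * (Δ + 1) := by rw [sum_const, smul_eq_mul, Set.ncard_eq_toFinset_card D]

theorem dominationNumber_eq_of_forall_le {V : Type*} {G : SimpleGraph V} {k : ℕ} {D₀ : Set V}
    (hD₀ : D₀.Finite ∧ D₀.ncard = k ∧ IsDominatingSet G D₀)
    (hk : ∀ D : Set V, D.Finite → IsDominatingSet G D → k ≤ D.ncard) :
    dominationNumber G = k :=
  le_antisymm (Nat.sInf_le ⟨D₀, hD₀⟩) <|
    le_csInf ⟨k, D₀, hD₀⟩ fun _ ⟨D, hfin, hcard, hdom⟩ ↦ hcard ▸ hk D hfin hdom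

theorem knodel_ncard_neighborSet_le (Δ m : ℕ) (v : ZMod m ⊕ ZMod m) :
    ((knodel Δ m).neighborSet v).ncard ≤ Δ := by
  obtain ⟨f, hf⟩ : ∃ f : ℕ → ZMod m ⊕ ZMod m, (knodel Δ m).neighborSet v ⊆ f '' Set.Iio Δ := by
    rcases v with i | j
    · refine ⟨fun k ↦ .inr (i + 2 ^ k - 1), ?_⟩
      rintro (_ | j) ⟨k, hk, rfl⟩
      exact ⟨k, hk, rfl⟩
    · refine ⟨fun k ↦ .inl (j - (2 ^ k - 1)), ?_⟩
      rintro (i | _) ⟨k, hk, rfl⟩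
      exact ⟨k, hk, by simp⟩
  calc _ ≤ (f '' Set.Iio Δ).ncard := Set.ncard_le_ncard hf ((Set.finite_Iio Δ).image f)
    _ ≤ (Set.Iio Δ).ncard := Set.ncard_image_le (Set.finite_Iio Δ)
    _ = Δ := by simp

instance (Δ m : ℕ) : DecidableRel (knodel Δ m).Adj
  | .inl i, .inr j => decidable_of_iff (∃ k ∈ Finset.range Δ, j = i + 2 ^ k - 1) (by simp [knodel])
  | .inr j, .inl i => decidable_of_iff (∃ k ∈ Finset.range Δ, j = i + 2 ^ k - 1) (by simp [knodel])
  | .inl _, .inl _ | .inr _, .inr _ => .isFalse id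

theorem knodel_4_9_isDominatingSet :
    IsDominatingSet (knodel 4 9)
      ↑({.inl 0, .inl 1, .inr 5, .inr 6} : Finset (ZMod 9 ⊕ ZMod 9)) := by
  unfold IsDominatingSet
  decide

theorem domination_knodel_18 : dominationNumber (knodel 4 9) = 4 := by
  refine dominationNumber_eq_of_forall_le
    ⟨Finset.finite_toSet _, by rw [Set.ncard_coe_finset]; decide, knodel_4_9_isDominatingSet⟩
    fun D _ hD ↦ ?_
  have hcount : 18 ≤ D.ncard * (4 + 1) := by
    simpa using nat_card_le_ncard_mul_of_isDominatingSet _ (knodel_ncard_neighborSet_le 4 9) hD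
  omega
end

section
/- The domination number of the Knödel graph W_{4,28} is 7. -/
/-!
Write `A` and `B` for the parts of a dominating set in `U` and in `V`. A vertex of `V` dominates
only four vertices of `U`, so `14 ≤ #A + 4 * #B`, and symmetrically `14 ≤ #B + 4 * #A`; a
dominating set of six vertices therefore has `#A = #B = 3`. Rotating both sides by the same amount
is an automorphism, so we may assume `v_0 ∈ B`. Any three vertices of `V` leave at least three
vertices of `U` undominated, so `A` is exactly that set, and running through the two other
vertices of `B` shows that `B` and the neighbours of `A` never cover `V`. On the other hand
`u_0, u_1, u_2, u_5, v_10, v_11, v_13` is a dominating set.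
-/

open Finset Pointwise

theorem dominationNumber_eq {V : Type*} {G : SimpleGraph V} {n : ℕ} (D : Finset V)
    (hD : IsDominatingSet G ↑D) (hcard : #D = n)
    (hmin : ∀ E : Finset V, IsDominatingSet G ↑E → n ≤ #E) : dominationNumber G = n := by
  have hn : n ∈ {k | ∃ D : Set V, D.Finite ∧ D.ncard = k ∧ IsDominatingSet G D} :=
    ⟨D, D.finite_toSet, by rw [Set.ncard_coe_finset, hcard], hD⟩
  refine le_antisymm (Nat.sInf_le hn) (le_csInf ⟨n, hn⟩ ?_)
  rintro k ⟨E, hfin, rfl, hdom⟩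
  lift E to Finset V using hfin
  rw [Set.ncard_coe_finset]
  exact hmin E hdom

section DominatingPair

variable {G : Type*} [AddCommGroup G] [Fintype G] [DecidableEq G]

/-- `A ⊆ U` and `B ⊆ V` together dominate the bipartite graph on `U ⊕ V`, both copies of `G`,
in which `u_i ~ v_j` iff `j - i ∈ O`. -/
def IsDominatingPair (O A B : Finset G) : Prop :=
  A ∪ (B - O) = univ ∧ B ∪ (A + O) = univ

instance (O A B : Finset G) : Decidable (IsDominatingPair O A B) :=
  inferInstanceAs (Decidable (_ ∧ _))

variable {O A B : Finset G}

theorem IsDominatingPair.vadd (h : IsDominatingPair O A B) (t : G) :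
    IsDominatingPair O (t +ᵥ A) (t +ᵥ B) := by
  constructor
  · rw [vadd_sub_assoc, ← vadd_finset_union, h.1, vadd_finset_univ]
  · rw [vadd_add_assoc, ← vadd_finset_union, h.2, vadd_finset_univ]

theorem IsDominatingPair.card_le_left (h : IsDominatingPair O A B) :
    Fintype.card G ≤ #A + #B * #O :=
  calc Fintype.card G = #(A ∪ (B - O)) := by rw [h.1, card_univ]
    _ ≤ #A + #(B - O) := card_union_le _ _
    _ ≤ #A + #B * #O := Nat.add_le_add_left card_sub_le _

theorem IsDominatingPair.card_le_right (h : IsDominatingPair O A B) :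
    Fintype.card G ≤ #B + #A * #O :=
  calc Fintype.card G = #(B ∪ (A + O)) := by rw [h.2, card_univ]
    _ ≤ #B + #(A + O) := card_union_le _ _
    _ ≤ #B + #A * #O := Nat.add_le_add_left card_add_le _

end DominatingPair

section Knodel

variable {Δ m : ℕ}

def knodelOffsets (Δ m : ℕ) : Finset (ZMod m) :=
  (range Δ).image fun k => 2 ^ k - 1

theorem sub_mem_knodelOffsets {i j : ZMod m} :
    j - i ∈ knodelOffsets Δ m ↔ ∃ k, k < Δ ∧ j = i + 2 ^ k - 1 := by
  simp only [knodelOffsets, mem_image, mem_range]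
  refine exists_congr fun k => and_congr_right fun _ => ?_
  constructor <;> intro h <;> linear_combination -h

@[simp]
theorem knodel_adj_inl_inr {i j : ZMod m} :
    (knodel Δ m).Adj (.inl i) (.inr j) ↔ j - i ∈ knodelOffsets Δ m :=
  sub_mem_knodelOffsets.symm

@[simp]
theorem knodel_adj_inr_inl {i j : ZMod m} :
    (knodel Δ m).Adj (.inr j) (.inl i) ↔ j - i ∈ knodelOffsets Δ m :=
  sub_mem_knodelOffsets.symm

@[simp]
theorem knodel_not_adj_inl_inl {i i' : ZMod m} : ¬(knodel Δ m).Adj (.inl i) (.inl i') :=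
  id

@[simp]
theorem knodel_not_adj_inr_inr {j j' : ZMod m} : ¬(knodel Δ m).Adj (.inr j) (.inr j') :=
  id

theorem exists_adj_inl_iff (F : Finset (ZMod m ⊕ ZMod m)) (i : ZMod m) :
    (∃ u ∈ F, (knodel Δ m).Adj u (.inl i)) ↔ i ∈ F.toRight - knodelOffsets Δ m := by
  simp only [Sum.exists, knodel_not_adj_inl_inl, knodel_adj_inr_inl, and_false, exists_false,
    false_or, mem_sub, mem_toRight]
  refine exists_congr fun j => and_congr_right fun _ => ⟨fun h => ⟨_, h, sub_sub_cancel j i⟩, ?_⟩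
  rintro ⟨o, ho, rfl⟩
  rwa [sub_sub_cancel]

theorem exists_adj_inr_iff (F : Finset (ZMod m ⊕ ZMod m)) (j : ZMod m) :
    (∃ u ∈ F, (knodel Δ m).Adj u (.inr j)) ↔ j ∈ F.toLeft + knodelOffsets Δ m := by
  simp only [Sum.exists, knodel_adj_inl_inr, knodel_not_adj_inr_inr, and_false, exists_false,
    or_false, mem_add, mem_toLeft]
  refine exists_congr fun i => and_congr_right fun _ => ⟨fun h => ⟨_, h, add_sub_cancel i j⟩, ?_⟩
  rintro ⟨o, ho, rfl⟩
  rwa [add_sub_cancel_left]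

theorem isDominatingSet_knodel_iff [NeZero m] (F : Finset (ZMod m ⊕ ZMod m)) :
    IsDominatingSet (knodel Δ m) ↑F ↔
      IsDominatingPair (knodelOffsets Δ m) F.toLeft F.toRight := by
  simp only [IsDominatingSet, IsDominatingPair, eq_univ_iff_forall, mem_union, mem_coe,
    Sum.forall, mem_toLeft, mem_toRight, exists_adj_inl_iff, exists_adj_inr_iff,
    or_iff_not_imp_left]

end Knodel

theorem three_le_card_compl_sub_knodelOffsets : ∀ b c : ZMod 14,
    3 ≤ #((({0, b, c} : Finset (ZMod 14)) - knodelOffsets 4 14)ᶜ) := by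
  decide +kernel

theorem not_isDominatingPair_compl_sub_knodelOffsets : ∀ b c : ZMod 14,
    #((({0, b, c} : Finset (ZMod 14)) - knodelOffsets 4 14)ᶜ) = 3 →
      ¬IsDominatingPair (knodelOffsets 4 14) ({0, b, c} - knodelOffsets 4 14)ᶜ {0, b, c} := by
  decide +kernel

theorem not_isDominatingPair_of_card_eq_three {A B : Finset (ZMod 14)} (hA : #A = 3)
    (hB : #B = 3) : ¬IsDominatingPair (knodelOffsets 4 14) A B := by
  intro h
  wlog hB₀ : (0 : ZMod 14) ∈ B generalizing A B
  · obtain ⟨b, hb⟩ := card_pos.1 (hB ▸ three_pos)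
    refine this (A := -b +ᵥ A) (B := -b +ᵥ B) (by rwa [card_vadd_finset])
      (by rwa [card_vadd_finset]) (h.vadd (-b)) (mem_vadd_finset.2 ⟨b, hb, neg_add_cancel b⟩)
  obtain ⟨b, c, -, hbc⟩ := card_eq_two.1 (by rw [card_erase_of_mem hB₀, hB] : #(B.erase 0) = 2)
  rw [← insert_erase hB₀, hbc] at h
  have hsub : (({0, b, c} : Finset (ZMod 14)) - knodelOffsets 4 14)ᶜ ⊆ A := fun x hx =>
    (mem_union.1 (h.1 ▸ mem_univ x)).resolve_right (mem_compl.1 hx)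
  have hA_eq := eq_of_subset_of_card_le hsub (hA ▸ three_le_card_compl_sub_knodelOffsets b c)
  rw [← hA_eq] at hA h
  exact not_isDominatingPair_compl_sub_knodelOffsets b c hA h

theorem seven_le_card_of_isDominatingSet_knodel_4_14 (F : Finset (ZMod 14 ⊕ ZMod 14))
    (hF : IsDominatingSet (knodel 4 14) ↑F) : 7 ≤ #F := by
  rw [isDominatingSet_knodel_iff] at hF
  have hO : #(knodelOffsets 4 14) = 4 := by decide
  have hU := hF.card_le_left
  have hV := hF.card_le_right
  rw [ZMod.card, hO] at hU hV
  rw [← card_toLeft_add_card_toRight]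
  by_contra! h
  exact not_isDominatingPair_of_card_eq_three (by omega) (by omega) hF

theorem isDominatingSet_knodel_4_14 :
    IsDominatingSet (knodel 4 14)
      ↑(({0, 1, 2, 5} : Finset (ZMod 14)).disjSum ({10, 11, 13} : Finset (ZMod 14))) := by
  rw [isDominatingSet_knodel_iff, toLeft_disjSum, toRight_disjSum]
  decide

theorem domination_knodel_28 : dominationNumber (knodel 4 14) = 7 :=
  dominationNumber_eq _ isDominatingSet_knodel_4_14 rfl
    seven_le_card_of_isDominatingSet_knodel_4_14
end
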